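/- Let ω = (1/2)(dy₁∧dy₂ + dy₂∧d(y₃+y₄) + d(y₃+y₄−y₂)∧dy₁ + 2 dy₃∧dy₄ + d(y₃+y₄)∧dy₅ + dy₅∧d(y₁+y₂) + d(y₁+y₂−y₅)∧d(y₃+y₄−y₅) + 2 d(y₁+y₂+y₃+y₄−2y₅)∧dy₆ + 2 dy₇∧dy₈) be a 2-form on ℝ⁸. Then ω⁴/4! = ±2 dy₁∧dy₂∧⋯∧dy₈, i.e. its coefficient with respect to dy₁∧⋯∧dy₈ has absolute value 2. -/

import Mathlib

noncomputable def dy (i : Fin 8) : ExteriorAlgebra ℝ (Fin 8 → ℝ) :=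
  ExteriorAlgebra.ι ℝ (Pi.single i (1 : ℝ))

noncomputable def ω21 : ExteriorAlgebra ℝ (Fin 8 → ℝ) :=
  ((2 : ℝ)⁻¹) • (dy 0 * dy 1
    + dy 1 * (dy 2 + dy 3)
    + (dy 2 + dy 3 - dy 1) * dy 0
    + (2 : ℝ) • (dy 2 * dy 3)
    + (dy 2 + dy 3) * dy 4
    + dy 4 * (dy 0 + dy 1)
    + (dy 0 + dy 1 - dy 4) * (dy 2 + dy 3 - dy 4)
    + (2 : ℝ) • ((dy 0 + dy 1 + dy 2 + dy 3 - (2 : ℝ) • dy 4) * dy 5)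
    + (2 : ℝ) • (dy 6 * dy 7))

/-!
Completing squares puts `ω21` in Darboux form `α₀∧α₁ + α₂∧α₃ + α₄∧α₅ + α₆∧α₇` for
covectors `αₖ` that are upper triangular in the basis `dy`. The four blocks are even, hence
commute, and square to zero, so `ω21⁴ = 4! α₀∧⋯∧α₇`. A top-degree wedge is alternating in its
factors, so `α₀∧⋯∧α₇ = det(α) dy 0∧⋯∧dy 7`, and `det α = -2` is the product of the diagonal.
-/

theorem AlternatingMap.apply_eq_basis_det_smul {R M N ι : Type*} [CommRing R] [AddCommGroup M]
    [Module R M] [AddCommGroup N] [Module R N] [Fintype ι] [DecidableEq ι]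
    (e : Module.Basis ι R M) (f : M [⋀^ι]→ₗ[R] N) (v : ι → M) :
    f v = e.det v • f e := by
  suffices f = e.det.smulRight (f e) from congr($this v)
  refine e.ext_alternating fun i hi => ?_
  let σ : Equiv.Perm ι := Equiv.ofBijective i (Finite.injective_iff_bijective.1 hi)
  change f (e ∘ σ) = e.det (e ∘ σ) • f e
  simp [AlternatingMap.map_perm, Module.Basis.det_self, Units.smul_def, Int.cast_smul_eq_zsmul]

theorem add_pow_succ_of_mul_self_eq_zero {R : Type*} [Semiring R] {x y : R} (hxy : Commute x y)
    (hx : x * x = 0) (n : ℕ) : (x + y) ^ (n + 1) = (n + 1) • (x * y ^ n) + y ^ (n + 1) := by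
  induction n with
  | zero => simp
  | succ n ih =>
    have hxyx : x * y ^ n * x = 0 := by
      rw [mul_assoc, ← (hxy.pow_right n).eq, ← mul_assoc, hx, zero_mul]
    rw [pow_succ, ih, add_mul, mul_add, mul_add, smul_mul_assoc, smul_mul_assoc, hxyx,
      ← (hxy.pow_right (n + 1)).eq, mul_assoc x, ← pow_succ, ← pow_succ, smul_zero, zero_add,
      succ_nsmul _ (n + 1)]
    abel

section
variable {R : Type*} [Semiring R] (l : List R)


theorem List.sum_pow_length_succ_eq_zero (hc : l.Pairwise Commute) (hsq : ∀ x ∈ l, x * x = 0) :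
    l.sum ^ (l.length + 1) = 0 := by
  induction l with
  | nil => simp
  | cons x t ih =>
    rw [List.pairwise_cons] at hc
    have ht := ih hc.2 fun y hy => hsq y (List.mem_cons_of_mem x hy)
    rw [List.sum_cons, List.length_cons,
      add_pow_succ_of_mul_self_eq_zero (Commute.list_sum_right x t hc.1) (hsq x List.mem_cons_self),
      pow_succ t.sum (t.length + 1), ht]
    simp

theorem List.sum_pow_length (hc : l.Pairwise Commute) (hsq : ∀ x ∈ l, x * x = 0) :
    l.sum ^ l.length = l.length.factorial • l.prod := by
  induction l with
  | nil => simp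
  | cons x t ih =>
    rw [List.pairwise_cons] at hc
    have hsq' : ∀ y ∈ t, y * y = 0 := fun y hy => hsq y (List.mem_cons_of_mem x hy)
    rw [List.sum_cons, List.length_cons, List.prod_cons,
      add_pow_succ_of_mul_self_eq_zero (Commute.list_sum_right x t hc.1) (hsq x List.mem_cons_self),
      ih hc.2 hsq', List.sum_pow_length_succ_eq_zero t hc.2 hsq', add_zero, mul_smul_comm,
      smul_smul, Nat.factorial_succ]
end

namespace ExteriorAlgebra
variable {R M : Type*} [CommRing R] [AddCommGroup M] [Module R M]


theorem ι_mul_ι_anticomm (x y : M) : ι R x * ι R y = -(ι R y * ι R x) :=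
  eq_neg_of_add_eq_zero_left (ι_add_mul_swap x y)

theorem commute_ι_mul_ι_ι (a b c : M) : Commute (ι R a * ι R b) (ι R c) := by
  rw [commute_iff_eq, mul_assoc, ι_mul_ι_anticomm b, mul_neg, ← mul_assoc, ι_mul_ι_anticomm a,
    neg_mul, neg_neg, mul_assoc]

theorem commute_ι_mul_ι (a b c d : M) : Commute (ι R a * ι R b) (ι R c * ι R d) :=
  (commute_ι_mul_ι_ι a b c).mul_right (commute_ι_mul_ι_ι a b d)

theorem ι_mul_ι_mul_self (a b : M) : ι R a * ι R b * (ι R a * ι R b) = 0 := by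
  rw [mul_assoc, ← mul_assoc (ι R b), ι_mul_ι_anticomm b, neg_mul, mul_neg, ← mul_assoc,
    ← mul_assoc, ι_sq_zero, zero_mul, zero_mul, neg_zero]

theorem ιMulti_eq_det_smul (n : ℕ) (v : Fin n → Fin n → R) :
    ιMulti R n v = (Matrix.of v).det • ιMulti R n fun i => Pi.single i 1 := by
  rw [(ιMulti R n).apply_eq_basis_det_smul (Pi.basisFun R (Fin n)), Pi.basisFun_det_apply]
  congr 2 with i : 1
  exact Pi.basisFun_apply R (Fin n) i

end ExteriorAlgebra

open ExteriorAlgebra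

theorem ι_eq_sum_dy (v : Fin 8 → ℝ) : ι ℝ v = ∑ j, v j • dy j := by
  conv_lhs => rw [← (Pi.basisFun ℝ (Fin 8)).sum_repr v]
  simp only [map_sum, map_smul, Pi.basisFun_repr, Pi.basisFun_apply, dy]

def darbouxCoframe : Fin 8 → Fin 8 → ℝ :=
  ![![1, 0, -1, -1, 1, -1, 0, 0],
    ![0, 1, 0, 0, -1, 1, 0, 0],
    ![0, 0, 1, 0, 0, -2, 0, 0],
    ![0, 0, 0, 1, 0, 2, 0, 0],
    ![0, 0, 0, 0, -2, 0, 0, 0],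
    ![0, 0, 0, 0, 0, 1, 0, 0],
    ![0, 0, 0, 0, 0, 0, 1, 0],
    ![0, 0, 0, 0, 0, 0, 0, 1]]

local notation "α" => darbouxCoframe

def darbouxBlocks : List (ExteriorAlgebra ℝ (Fin 8 → ℝ)) :=
  [ι ℝ (α 0) * ι ℝ (α 1), ι ℝ (α 2) * ι ℝ (α 3), ι ℝ (α 4) * ι ℝ (α 5), ι ℝ (α 6) * ι ℝ (α 7)]

theorem ω21_eq_sum_darbouxBlocks : ω21 = darbouxBlocks.sum := by
  simp only [ω21, darbouxBlocks, List.sum_cons, List.sum_nil, ι_eq_sum_dy, Fin.sum_univ_eight,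
    darbouxCoframe, Matrix.cons_val_zero, Matrix.cons_val_one, Matrix.cons_val, one_smul,
    zero_smul, neg_smul, add_zero, zero_add]
  have anticomm : ∀ i j : Fin 8, j < i → dy i * dy j = -(dy j * dy i) :=
    fun _ _ _ => ι_mul_ι_anticomm _ _
  have mul_self : ∀ i, dy i * dy i = 0 := fun _ => ι_sq_zero _
  simp (disch := decide) only [mul_add, add_mul, sub_mul, mul_sub, smul_add, smul_sub,
    smul_neg, smul_smul, smul_mul_assoc, mul_smul_comm, anticomm, mul_self, mul_neg, neg_mul,
    neg_neg, smul_zero]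
  module

theorem det_darbouxCoframe : (Matrix.of α).det = -2 := by
  rw [Matrix.det_of_isUpperTriangular]
  · simp [Fin.prod_univ_eight, darbouxCoframe]
  · intro i j hij
    fin_cases i <;> fin_cases j <;> simp_all [darbouxCoframe]

theorem ιMulti_single_eq_prod_dy : ιMulti ℝ 8 (fun i => Pi.single i (1 : ℝ)) =
    dy 0 * dy 1 * dy 2 * dy 3 * dy 4 * dy 5 * dy 6 * dy 7 := by
  simp only [ιMulti_apply, List.ofFn_succ, List.ofFn_zero, List.prod_cons, List.prod_nil, mul_one,
    mul_assoc, dy]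
  rfl

theorem prod_darbouxBlocks : darbouxBlocks.prod = ιMulti ℝ 8 α := by
  simp only [darbouxBlocks, ιMulti_apply, List.ofFn_succ, List.ofFn_zero, List.prod_cons,
    List.prod_nil, mul_one, mul_assoc]
  rfl

theorem ω21_pow_four : ω21 ^ 4 = (Nat.factorial 4 : ℝ) • ιMulti ℝ 8 α := by
  rw [ω21_eq_sum_darbouxBlocks, Nat.cast_smul_eq_nsmul, ← prod_darbouxBlocks]
  exact List.sum_pow_length _ (by simp [darbouxBlocks, commute_ι_mul_ι])
    (by simp [darbouxBlocks, ι_mul_ι_mul_self])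

theorem stmt3 :
    ((Nat.factorial 4 : ℝ))⁻¹ • (ω21 ^ 4)
        = (2 : ℝ) • (dy 0 * dy 1 * dy 2 * dy 3 * dy 4 * dy 5 * dy 6 * dy 7)
    ∨ ((Nat.factorial 4 : ℝ))⁻¹ • (ω21 ^ 4)
        = -((2 : ℝ) • (dy 0 * dy 1 * dy 2 * dy 3 * dy 4 * dy 5 * dy 6 * dy 7)) := by
  right
  rw [ω21_pow_four, inv_smul_smul₀ (by positivity), ιMulti_eq_det_smul, det_darbouxCoframe,
    ιMulti_single_eq_prod_dy, neg_smul]
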